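/- arXiv:2404.08072 — 2 statements merged into one kernel-verified Lean document; each statement's English description precedes it below -/
import Mathlib

section
/- Let A be a finite alphabet, u ∈ A*, and a, b ∈ A with a ≠ b. Then Pal(u)·a is a prefix of ψ_u(ab), and Pal(u) is the longest common prefix of ψ_u(ab) and ψ_u(ba), i.e. Pal(u) = gcp(ψ_u(ab), ψ_u(ba)). -/
open List

section EpiDefs

variable {A : Type*}

/-- The episturmian generator ψ_a : a ↦ a, b ↦ ab for b ≠ a, as a map on words. -/
def psiL [DecidableEq A] (a : A) : List A → List A :=
  fun u => (u.map (fun b => if b = a then [a] else [a, b])).flatten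

/-- The episturmian generator ψ̄_a : a ↦ a, b ↦ ba for b ≠ a, as a map on words. -/
def psibarL [DecidableEq A] (a : A) : List A → List A :=
  fun u => (u.map (fun b => if b = a then [a] else [b, a])).flatten

/-- ψ_{u₁⋯uₙ} = ψ_{u₁} ∘ ⋯ ∘ ψ_{uₙ}. -/
def psiW [DecidableEq A] (u : List A) : List A → List A :=
  u.foldr (fun a f => psiL a ∘ f) id

/-- ψ̄_{u₁⋯uₙ} = ψ̄_{u₁} ∘ ⋯ ∘ ψ̄_{uₙ}. -/
def psibarW [DecidableEq A] (u : List A) : List A → List A :=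
  u.foldr (fun a f => psibarL a ∘ f) id

/-- There is a shortest palindrome having `x` as a prefix. -/
theorem exists_isPalClosure (x : List A) :
    ∃ p : List A, (p.reverse = p ∧ x <+: p) ∧
      ∀ q : List A, q.reverse = q → x <+: q → p.length ≤ q.length := by
  classical
  have hex : ∃ n : ℕ, ∃ p : List A, (p.reverse = p ∧ x <+: p) ∧ p.length = n :=
    ⟨(x ++ x.reverse).length, x ++ x.reverse, ⟨by simp, ⟨x.reverse, rfl⟩⟩, rfl⟩
  obtain ⟨p, hp, hlen⟩ := Nat.find_spec hex
  refine ⟨p, hp, fun q h1 h2 => ?_⟩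
  rw [hlen]
  exact Nat.find_le ⟨q, ⟨h1, h2⟩, rfl⟩

/-- `palPlus x = x⁽⁺⁾` is the shortest palindrome having `x` as a prefix. -/
noncomputable def palPlus (x : List A) : List A :=
  Classical.choose (exists_isPalClosure x)

/-- Iterated palindromic closure: Pal(ε) = ε, Pal(ua) = (Pal(u)a)⁽⁺⁾. -/
noncomputable def pal (u : List A) : List A :=
  u.foldl (fun p a => palPlus (p ++ [a])) []

/-- Longest common prefix. -/
def gcp [DecidableEq A] : List A → List A → List A
  | a :: x, b :: y => if a = b then a :: gcp x y else []
  | _, _ => []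

/-- Longest common suffix. -/
def gcs [DecidableEq A] (x y : List A) : List A :=
  (gcp x.reverse y.reverse).reverse

/-- The language of a (primitive) substitution: factors of σⁿ(a). -/
def LangS (σ : List A → List A) : Set (List A) :=
  {x | ∃ (n : ℕ) (a : A), x <:+: σ^[n] [a]}

/-- The language of the episturmian shift directed by `d`. -/
def LangD (d : ℕ → A) : Set (List A) :=
  {x | ∃ n : ℕ, x <:+: pal ((List.range n).map d)}

def LeftSpecial (L : Set (List A)) (v : List A) : Prop :=
  ∃ a b : A, a ≠ b ∧ a :: v ∈ L ∧ b :: v ∈ L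

def RightSpecial (L : Set (List A)) (v : List A) : Prop :=
  ∃ a b : A, a ≠ b ∧ v ++ [a] ∈ L ∧ v ++ [b] ∈ L

/-- The left return set of `u` in the language `L`. -/
def leftReturn (L : Set (List A)) (u : List A) : Set (List A) :=
  {r | r ++ u ∈ L ∧ (∃ s : List A, s ≠ [] ∧ r ++ u = u ++ s) ∧
    ¬∃ p q : List A, p ≠ [] ∧ q ≠ [] ∧ r ++ u = p ++ u ++ q}

/-- The right return set of `u` in the language `L`. -/
def rightReturn (L : Set (List A)) (u : List A) : Set (List A) :=
  {r | u ++ r ∈ L ∧ (∃ p : List A, p ≠ [] ∧ u ++ r = p ++ u) ∧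
    ¬∃ p q : List A, p ≠ [] ∧ q ≠ [] ∧ u ++ r = p ++ u ++ q}

/-- `σ` is an endomorphism of the free monoid A*. -/
def IsListHom (σ : List A → List A) : Prop :=
  ∀ x y : List A, σ (x ++ y) = σ x ++ σ y

/-- Primitivity of a substitution. -/
def IsPrimitiveSubst (σ : List A → List A) : Prop :=
  ∃ k : ℕ, 1 ≤ k ∧ ∀ a b : A, b ∈ σ^[k] [a]

/-- At least two distinct letters occur infinitely often in `d`. -/
def NonDegenerate (d : ℕ → A) : Prop :=
  ∃ a b : A, a ≠ b ∧ (∀ N : ℕ, ∃ n : ℕ, N ≤ n ∧ d n = a) ∧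
    (∀ N : ℕ, ∃ n : ℕ, N ≤ n ∧ d n = b)

end EpiDefs

section AuxProof

variable {A : Type*} [DecidableEq A]

/-- Explicit recursive form of the iterated palindromic closure. -/
def palE : List A → List A
  | [] => []
  | c :: v => psiL c (palE v) ++ [c]

lemma psiL_cons (c b : A) (w : List A) :
    psiL c (b :: w) = (if b = c then [c] else [c, b]) ++ psiL c w := by
  simp [psiL]

lemma psibarL_cons (c b : A) (w : List A) :
    psibarL c (b :: w) = (if b = c then [c] else [b, c]) ++ psibarL c w := by
  simp [psibarL]

lemma psiL_append (c : A) (x y : List A) :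
    psiL c (x ++ y) = psiL c x ++ psiL c y := by
  simp [psiL]

lemma psibarL_append (c : A) (x y : List A) :
    psibarL c (x ++ y) = psibarL c x ++ psibarL c y := by
  simp [psibarL]

lemma psiL_concat_eq (c : A) (w : List A) :
    psiL c w ++ [c] = c :: psibarL c w := by
  induction w with
  | nil => rfl
  | cons b w ih =>
    rw [psiL_cons, psibarL_cons]
    by_cases h : b = c <;> simp [h, append_assoc, ih]

lemma reverse_psiL (c : A) (w : List A) :
    (psiL c w).reverse = psibarL c w.reverse := by
  induction w with
  | nil => rfl
  | cons b w ih =>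
    rw [psiL_cons, reverse_append, ih, reverse_cons, psibarL_append]
    by_cases h : b = c <;> simp [h, psibarL]

lemma reverse_psiL_concat (c : A) (y : List A) :
    (psiL c y ++ [c]).reverse = psiL c y.reverse ++ [c] := by
  rw [reverse_append, reverse_psiL, psiL_concat_eq]
  rfl

lemma length_psibarL (c : A) (w : List A) :
    (psibarL c w).length = (psiL c w).length := by
  induction w with
  | nil => rfl
  | cons b w ih =>
    rw [psiL_cons, psibarL_cons]
    by_cases h : b = c <;> simp [h, ih]

lemma length_psiL_reverse (c : A) (w : List A) :
    (psiL c w.reverse).length = (psiL c w).length := by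
  have := congrArg List.length (reverse_psiL c w)
  simp only [length_reverse] at this
  rw [this, length_psibarL]

lemma psiL_cons_head (c b : A) (w : List A) :
    psiL c (b :: w) = c :: ((if b = c then [] else [b]) ++ psiL c w) := by
  rw [psiL_cons]
  by_cases h : b = c <;> simp [h]

lemma psiL_ne_nil (c : A) {w : List A} (h : w ≠ []) : psiL c w ≠ [] := by
  cases w with
  | nil => exact absurd rfl h
  | cons b w => rw [psiL_cons_head]; simp

lemma getLast?_psiL (c : A) (w : List A) :
    (psiL c w).getLast? = w.getLast? := by
  induction w with
  | nil => rfl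
  | cons b w ih =>
    cases w with
    | nil => by_cases h : b = c <;> simp [psiL_cons, h, psiL]
    | cons e w' =>
      rw [psiL_cons, List.getLast?_append_of_ne_nil _ (psiL_ne_nil c (by simp)), ih,
        List.getLast?_cons_cons]

lemma psiL_injective (c : A) : ∀ {x y : List A}, psiL c x = psiL c y → x = y := by
  intro x
  induction x with
  | nil =>
    intro y h
    cases y with
    | nil => rfl
    | cons b y' => rw [psiL_cons_head] at h; exact absurd h.symm (by simp [psiL])
  | cons a x' ih =>
    intro y h
    cases y with
    | nil => rw [psiL_cons_head] at h; exact absurd h (by simp [psiL])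
    | cons b y' =>
      rw [psiL_cons_head, psiL_cons_head] at h
      have h2 := (List.cons.injEq _ _ _ _).mp h |>.2
      by_cases ha : a = c <;> by_cases hb : b = c
      · simp only [ha, hb, if_pos rfl, nil_append] at h2
        rw [ha, hb, ih h2]
      · exfalso
        simp only [ha, hb, if_pos rfl, if_neg hb, nil_append, cons_append] at h2
        cases hx : x' with
        | nil => rw [hx] at h2; exact absurd h2.symm (by simp [psiL])
        | cons e x'' =>
          rw [hx, psiL_cons_head] at h2
          have := (List.cons.injEq _ _ _ _).mp h2 |>.1
          exact hb (this.symm)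
      · exfalso
        simp only [ha, hb, if_pos rfl, if_neg ha, nil_append, cons_append] at h2
        cases hy : y' with
        | nil => rw [hy] at h2; exact absurd h2 (by simp [psiL])
        | cons e y'' =>
          rw [hy, psiL_cons_head] at h2
          have := (List.cons.injEq _ _ _ _).mp h2 |>.1
          exact ha this
      · simp only [if_neg ha, if_neg hb, cons_append, nil_append] at h2
        have h3 := (List.cons.injEq _ _ _ _).mp h2
        rw [h3.1, ih h3.2]

end AuxProof


section AuxProof2

variable {A : Type*} [DecidableEq A]

lemma psiL_prefix_concat {x y : List A} (h : x <+: y) (c : A) :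
    psiL c x ++ [c] <+: psiL c y ++ [c] := by
  obtain ⟨z, rfl⟩ := h
  rw [psiL_append]
  cases z with
  | nil => simp [psiL]
  | cons b z' =>
    rw [psiL_cons_head]
    exact ⟨((if b = c then [] else [b]) ++ psiL c z') ++ [c], by simp⟩

lemma suffix_psiL (c : A) : ∀ (w q : List A), q <:+ psiL c w →
    q = [] ∨ (∃ q', q' <:+ w ∧ q = psiL c q') ∨
      (∃ b t, b ≠ c ∧ (b :: t) <:+ w ∧ q = b :: psiL c t) := by
  intro w
  induction w with
  | nil => intro q hq; left; simpa [psiL] using List.eq_nil_of_suffix_nil hq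
  | cons b w ih =>
    intro q hq
    rw [psiL_cons_head] at hq
    rcases List.suffix_cons_iff.mp hq with h | h
    · right; left
      exact ⟨b :: w, suffix_refl _, by rw [psiL_cons_head, h]⟩
    · by_cases hb : b = c
      · simp only [if_pos hb, nil_append] at h
        rcases ih q h with h1 | ⟨q', hq', rfl⟩ | ⟨b', t, hb', ht, rfl⟩
        · exact Or.inl h1
        · exact Or.inr (Or.inl ⟨q', hq'.trans (suffix_cons _ _), rfl⟩)
        · exact Or.inr (Or.inr ⟨b', t, hb', ht.trans (suffix_cons _ _), rfl⟩)
      · simp only [if_neg hb, cons_append, nil_append] at h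
        rcases List.suffix_cons_iff.mp h with h2 | h2
        · right; right
          exact ⟨b, w, hb, suffix_refl _, h2⟩
        · rcases ih q h2 with h1 | ⟨q', hq', rfl⟩ | ⟨b', t, hb', ht, rfl⟩
          · exact Or.inl h1
          · exact Or.inr (Or.inl ⟨q', hq'.trans (suffix_cons _ _), rfl⟩)
          · exact Or.inr (Or.inr ⟨b', t, hb', ht.trans (suffix_cons _ _), rfl⟩)

lemma suffix_concat_cases {q X : List A} {c : A} (h : q <:+ X ++ [c]) :
    q = [] ∨ ∃ q₂, q₂ <:+ X ∧ q = q₂ ++ [c] := by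
  obtain ⟨s, hs⟩ := h
  rcases List.eq_nil_or_concat q with rfl | ⟨q₂, a, rfl⟩
  · exact Or.inl rfl
  · right
    rw [List.concat_eq_append, ← append_assoc] at hs
    have h1 := List.append_inj_left' hs (by simp)
    have h2 : a = c := by
      have := List.append_inj_right' hs (by simp)
      simpa using this
    exact ⟨q₂, ⟨s, h1⟩, by rw [h2, List.concat_eq_append]⟩

lemma pal_psiL_concat_iff (c : A) (q' : List A) :
    (psiL c q' ++ [c]).reverse = psiL c q' ++ [c] ↔ q'.reverse = q' := by
  rw [reverse_psiL_concat]
  constructor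
  · intro h
    have := List.append_inj_left' h (by simp)
    exact psiL_injective c this
  · intro h; rw [h]

lemma pal_cut_case {c b : A} {t : List A} (hb : b ≠ c)
    (h : (b :: psiL c t).reverse = b :: psiL c t) : (b :: t).reverse = b :: t := by
  have h1 : b :: psiL c t = psibarL c t.reverse ++ [b] := by
    conv_lhs => rw [← h]
    rw [reverse_cons, reverse_psiL]
  have key : psiL c (b :: t) = psiL c (t.reverse ++ [b]) := by
    rw [psiL_cons_head, if_neg hb, psiL_append]
    show c :: (b :: psiL c t) = _
    rw [h1, ← List.cons_append, ← psiL_concat_eq, append_assoc]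
    congr 1
    simp [psiL_cons_head, if_neg hb, psiL]
  have h2 := psiL_injective c key
  calc (b :: t).reverse = t.reverse ++ [b] := by simp
    _ = b :: t := h2.symm

lemma palPlus_spec (x : List A) :
    (((palPlus x).reverse = palPlus x ∧ x <+: palPlus x) ∧
      ∀ q : List A, q.reverse = q → x <+: q → (palPlus x).length ≤ q.length) :=
  Classical.choose_spec (exists_isPalClosure x)

lemma palPlus_length_le (x : List A) : (palPlus x).length ≤ 2 * x.length := by
  have h := (palPlus_spec x).2 (x ++ x.reverse) (by simp) ⟨x.reverse, rfl⟩
  simpa [two_mul] using h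

lemma overlap {x p : List A} (hp : p.reverse = p) (hx : x <+: p)
    (hle : p.length ≤ 2 * x.length) :
    p = x ++ (x.take (p.length - x.length)).reverse ∧
      (x.drop (p.length - x.length)).reverse = x.drop (p.length - x.length) := by
  obtain ⟨r, rfl⟩ := hx
  have hrx : r.length ≤ x.length := by
    have := (List.length_append : (x ++ r).length = _) ▸ hle; omega
  have hk : (x ++ r).length - x.length = r.length := by simp
  rw [hk]
  have heq : r.reverse ++ x.reverse = x ++ r := by
    rw [← reverse_append, hp]
  have hr : r.reverse = x.take r.length := by
    have h1 : (r.reverse ++ x.reverse).take r.length = r.reverse :=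
      List.take_left' (by simp)
    have h2 : (x ++ r).take r.length = x.take r.length :=
      List.take_append_of_le_length hrx
    rw [← h1, heq, h2]
  constructor
  · rw [← hr, reverse_reverse]
  · have h3 : (r.reverse ++ x.reverse).drop r.length = x.reverse :=
      List.drop_left' (by simp)
    have h4 : (x ++ r).drop r.length = x.drop r.length ++ r :=
      List.drop_append_of_le_length hrx
    have h5 : x.reverse = x.drop r.length ++ r := by
      rw [← h3, heq, h4]
    have h6 : x.reverse = (x.drop r.length).reverse ++ (x.take r.length).reverse := by
      conv_lhs => rw [← List.take_append_drop r.length x]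
      rw [reverse_append]
    have h8 := h6.symm.trans h5
    have hlen : ((x.take r.length).reverse).length = r.length := by
      simp [Nat.min_eq_left hrx]
    have h9 : ((x.take r.length).reverse).length = r.length := hlen
    exact List.append_inj_left' h8 h9

lemma palPlus_decomp (x : List A) :
    ∃ k, k ≤ x.length ∧ (palPlus x).length = x.length + k ∧
      palPlus x = x ++ (x.take k).reverse ∧
      (x.drop k).reverse = x.drop k ∧
      (∀ q, q <:+ x → q.reverse = q → q.length + k ≤ x.length) := by
  obtain ⟨⟨hpal, hpre⟩, hmin⟩ := palPlus_spec x
  have hle := palPlus_length_le x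
  have hxle : x.length ≤ (palPlus x).length := hpre.length_le
  refine ⟨(palPlus x).length - x.length, by omega, by omega, ?_, ?_, ?_⟩
  · exact (overlap hpal hpre hle).1
  · exact (overlap hpal hpre hle).2
  · intro q hq hqpal
    obtain ⟨s, rfl⟩ := hq
    have hcomp := hmin ((s ++ q) ++ s.reverse)
      (by simp [hqpal, append_assoc]) ⟨s.reverse, rfl⟩
    simp only [length_append, length_reverse] at hcomp ⊢
    omega

lemma palPlus_eq_of {x P : List A} (hpal : P.reverse = P) (hpre : x <+: P)
    (hmin : ∀ q : List A, q.reverse = q → x <+: q → P.length ≤ q.length) :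
    palPlus x = P := by
  obtain ⟨⟨hpal', hpre'⟩, hmin'⟩ := palPlus_spec x
  have h1 : (palPlus x).length ≤ P.length := hmin' P hpal hpre
  have h2 : P.length ≤ (palPlus x).length := hmin _ hpal' hpre'
  have hlen : (palPlus x).length = P.length := le_antisymm h1 h2
  have hle : P.length ≤ 2 * x.length := hlen ▸ palPlus_length_le x
  rw [(overlap hpal hpre hle).1, (overlap hpal' hpre' (palPlus_length_le x)).1, hlen]

end AuxProof2


section AuxProof3

variable {A : Type*} [DecidableEq A]

lemma psiL_take_drop_length (c : A) (w : List A) (k : ℕ) :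
    (psiL c (w.take k)).length + (psiL c (w.drop k)).length = (psiL c w).length := by
  rw [← length_append, ← psiL_append, take_append_drop]

lemma length_psiL_palPlus (c : A) (w : List A) (k : ℕ)
    (hW : palPlus w = w ++ (w.take k).reverse) :
    (psiL c (palPlus w)).length + (psiL c (w.drop k)).length
      = 2 * (psiL c w).length := by
  rw [hW, psiL_append, length_append, length_psiL_reverse]
  have := psiL_take_drop_length c w k
  omega

lemma psiL_suffix_length_le (c : A) {q Q w : List A} (hq : q <:+ w) (hQ : Q <:+ w)
    (hle : q.length ≤ Q.length) : (psiL c q).length ≤ (psiL c Q).length := by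
  obtain ⟨pre, rfl⟩ := List.suffix_of_suffix_length_le hq hQ hle
  rw [psiL_append, length_append]
  omega

lemma pal_head?_eq_getLast? {q : List A} (h : q.reverse = q) : q.head? = q.getLast? := by
  conv_lhs => rw [← h]
  exact List.head?_reverse

lemma getLast?_suffix {q w : List A} (h : q <:+ w) (hq : q ≠ []) :
    q.getLast? = w.getLast? := by
  obtain ⟨s, rfl⟩ := h
  exact (List.getLast?_append_of_ne_nil s hq).symm

lemma getLast_singleton_suffix {w : List A} {d : A} (hw : w.getLast? = some d) :
    [d] <:+ w := by
  have hne : w ≠ [] := by rintro rfl; simp at hw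
  have h1 := List.getLast?_eq_getLast hne
  rw [hw] at h1
  have h2 : w.getLast hne = d := (Option.some_inj.mp h1).symm
  refine ⟨w.dropLast, ?_⟩
  conv_rhs => rw [← List.dropLast_append_getLast hne, h2]

/-- Key closure lemma, aligned case: `(ψ_c(w)c)⁽⁺⁾ = ψ_c(w⁽⁺⁾)c`. -/
lemma palPlus_psiL_concat (c : A) (w : List A) :
    palPlus (psiL c w ++ [c]) = psiL c (palPlus w) ++ [c] := by
  obtain ⟨⟨hWpal, hWpre⟩, _⟩ := palPlus_spec w
  obtain ⟨k, hk, hlenW, hW, hQpal, hbound⟩ := palPlus_decomp w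
  have hlen2 : (psiL c (palPlus w)).length + (psiL c (w.drop k)).length
      = 2 * (psiL c w).length := length_psiL_palPlus c w k hW
  apply palPlus_eq_of
  · rw [reverse_psiL_concat, hWpal]
  · exact psiL_prefix_concat hWpre c
  · intro p hp hxp
    rw [length_append, length_singleton]
    set xlen := (psiL c w).length with hxldef
    have hxlen : xlen + 1 ≤ p.length := by
      have := hxp.length_le; simpa [length_append] using this
    by_cases hcase : p.length ≤ 2 * (xlen + 1)
    · have hov := overlap hp hxp (by simpa [length_append, two_mul] using hcase)
      set m := p.length - (psiL c w ++ [c]).length with hm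
      have hmeq : m = p.length - (xlen + 1) := by simp [hm, length_append, hxldef]
      have hqpal := hov.2
      set q := (psiL c w ++ [c]).drop m with hqdef
      have hqsuf : q <:+ psiL c w ++ [c] := List.drop_suffix _ _
      have hqlen : q.length = (xlen + 1) - m := by simp [hqdef, length_append, hxldef]
      rcases suffix_concat_cases hqsuf with hq0 | ⟨q₂, hq₂suf, hq₂⟩
      · have hq0' : q.length = 0 := by rw [hq0]; rfl
        omega
      · rcases suffix_psiL c _ q₂ hq₂suf with rfl | ⟨q', hq'suf, rfl⟩ | ⟨b, t, hbc, hbt, rfl⟩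
        · have hq1 : q.length = 1 := by rw [hq₂]; rfl
          omega
        · have hq'pal : q'.reverse = q' :=
            (pal_psiL_concat_iff c q').mp (by rw [← hq₂]; exact hqpal)
          have hq'bound := hbound q' hq'suf hq'pal
          have hle1 : (psiL c q').length ≤ (psiL c (w.drop k)).length :=
            psiL_suffix_length_le c hq'suf (List.drop_suffix _ _)
              (by simp only [length_drop]; omega)
          have hqlen2 : q.length = (psiL c q').length + 1 := by
            rw [hq₂]; simp
          omega
        · exfalso
          have h1 : q.getLast? = some c := by rw [hq₂]; exact List.getLast?_concat
          have h2 : q.head? = some b := by rw [hq₂]; rfl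
          have h3 := pal_head?_eq_getLast? hqpal
          rw [h1, h2] at h3
          exact hbc (by injection h3)
    · omega

/-- Key closure lemma, cut case: if `w` ends with `d ≠ c` then `(ψ_c(w))⁽⁺⁾ = ψ_c(w⁽⁺⁾)c`. -/
lemma palPlus_psiL_of_getLast {c d : A} (hdc : d ≠ c) {w : List A}
    (hw : w.getLast? = some d) :
    palPlus (psiL c w) = psiL c (palPlus w) ++ [c] := by
  obtain ⟨⟨hWpal, hWpre⟩, _⟩ := palPlus_spec w
  obtain ⟨k, hk, hlenW, hW, hQpal, hbound⟩ := palPlus_decomp w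
  have hlen2 : (psiL c (palPlus w)).length + (psiL c (w.drop k)).length
      = 2 * (psiL c w).length := length_psiL_palPlus c w k hW
  have hQne : 1 ≤ (psiL c (w.drop k)).length := by
    have hb := hbound [d] (getLast_singleton_suffix hw) (by simp)
    simp only [length_singleton] at hb
    have : w.drop k ≠ [] := by
      intro h
      have := congrArg List.length h
      simp only [length_drop, length_nil] at this
      omega
    have := psiL_ne_nil c this
    exact List.length_pos_iff.mpr this
  apply palPlus_eq_of
  · rw [reverse_psiL_concat, hWpal]
  · obtain ⟨z, hz⟩ := hWpre
    exact ⟨psiL c z ++ [c], by rw [← append_assoc, ← psiL_append, hz]⟩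
  · intro p hp hxp
    rw [length_append, length_singleton]
    set xlen := (psiL c w).length with hxldef
    have hxlen : xlen ≤ p.length := hxp.length_le
    by_cases hcase : p.length ≤ 2 * xlen
    · have hov := overlap hp hxp hcase
      set m := p.length - (psiL c w).length with hm
      have hqpal := hov.2
      set q := (psiL c w).drop m with hqdef
      have hqsuf : q <:+ psiL c w := List.drop_suffix _ _
      have hqlen : q.length = xlen - m := by simp [hqdef, hxldef]
      rcases suffix_psiL c _ q hqsuf with hq0 | ⟨q', hq'suf, hq₂⟩ | ⟨b, t, hbc, hbt, hq₂⟩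
      · have hq0' : q.length = 0 := by rw [hq0]; rfl
        omega
      · cases q' with
        | nil =>
          have hq0' : q.length = 0 := by rw [hq₂]; rfl
          omega
        | cons e q'' =>
          exfalso
          have hq'ne : (e :: q'') ≠ [] := by simp
          have h1 : q.getLast? = some d := by
            rw [hq₂, getLast?_psiL, getLast?_suffix hq'suf hq'ne, hw]
          have h2 : q.head? = some c := by rw [hq₂, psiL_cons_head]; rfl
          have h3 := pal_head?_eq_getLast? hqpal
          rw [h1, h2] at h3
          exact hdc (Option.some_inj.mp h3).symm
      · have hbtpal : (b :: t).reverse = b :: t :=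
          pal_cut_case hbc (by rw [← hq₂]; exact hqpal)
        have hbound' := hbound (b :: t) hbt hbtpal
        have hle1 : (psiL c (b :: t)).length ≤ (psiL c (w.drop k)).length :=
          psiL_suffix_length_le c hbt (List.drop_suffix _ _)
            (by simp only [length_drop]; omega)
        have hqlen2 : q.length + 1 = (psiL c (b :: t)).length := by
          rw [hq₂, psiL_cons, if_neg hbc]
          simp
        omega
    · omega

lemma psiL_nil' (c : A) : psiL c ([] : List A) = [] := rfl

lemma palE_concat (u : List A) : ∀ d : A, palPlus (palE u ++ [d]) = palE (u ++ [d]) := by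
  induction u with
  | nil =>
    intro d
    have h1 : palE ([] ++ [d]) = [d] := by
      show palE [d] = [d]
      simp [palE, psiL]
    rw [h1]
    apply palPlus_eq_of (by simp) (by simp [palE])
    intro q _ hq
    have := hq.length_le
    simpa [palE] using this
  | cons c v ih =>
    intro d
    by_cases hd : d = c
    · subst hd
      have h1 : palE (d :: v) ++ [d] = psiL d (palE v ++ [d]) ++ [d] := by
        rw [palE, psiL_append]
        simp [psiL]
      rw [h1, palPlus_psiL_concat, ih d]
      rfl
    · have h1 : palE (c :: v) ++ [d] = psiL c (palE v ++ [d]) := by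
        rw [palE, psiL_append, append_assoc]
        congr 1
        simp [psiL, hd]
      rw [h1, palPlus_psiL_of_getLast (c := c) (d := d) hd (by simp), ih d]
      rfl

lemma pal_eq_palE (u : List A) : pal u = palE u := by
  induction u using List.reverseRecOn with
  | nil => rfl
  | append_singleton u d ih =>
    have h1 : pal (u ++ [d]) = palPlus (pal u ++ [d]) := by
      show List.foldl _ _ _ = _
      rw [List.foldl_append]
      rfl
    rw [h1, ih, palE_concat]

end AuxProof3


section AuxProof4

variable {A : Type*} [DecidableEq A]

lemma psiW_cons (c : A) (v : List A) (x : List A) :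
    psiW (c :: v) x = psiL c (psiW v x) := rfl

lemma psiW_inv (u : List A) : ∀ a b : A, a ≠ b →
    ∃ s : List A, s ≠ [] ∧ s.getLast? = some b ∧ psiW u [a, b] = palE u ++ a :: s := by
  induction u with
  | nil =>
    intro a b _
    exact ⟨[b], by simp, by simp, rfl⟩
  | cons c v ih =>
    intro a b hab
    obtain ⟨s, hne, hlast, heq⟩ := ih a b hab
    have hstep : psiW (c :: v) [a, b] = psiL c (palE v) ++ psiL c (a :: s) := by
      rw [psiW_cons, heq, psiL_append]
    by_cases hac : a = c
    · subst hac
      obtain ⟨s₀, s₁, rfl⟩ : ∃ s₀ s₁, s = s₀ :: s₁ := by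
        cases s with
        | nil => exact absurd rfl hne
        | cons s₀ s₁ => exact ⟨s₀, s₁, rfl⟩
      have h2 : psiL a (a :: s₀ :: s₁) =
          a :: a :: ((if s₀ = a then [] else [s₀]) ++ psiL a s₁) := by
        rw [psiL_cons_head, if_pos rfl, nil_append, psiL_cons_head]
      set r := (if s₀ = a then [] else [s₀]) ++ psiL a s₁ with hr
      have h3 : (a :: r).getLast? = some b := by
        have : a :: r = psiL a (s₀ :: s₁) := by rw [psiL_cons_head]
        rw [this, getLast?_psiL, hlast]
      have hrne : r ≠ [] := by
        intro h
        rw [h] at h3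
        simp at h3
        exact hab h3
      refine ⟨r, hrne, ?_, ?_⟩
      · rw [← h3]
        exact (List.getLast?_append_of_ne_nil [a] hrne).symm
      · rw [hstep, h2, palE]
        simp [append_assoc]
    · refine ⟨psiL c s, psiL_ne_nil c hne, ?_, ?_⟩
      · rw [getLast?_psiL, hlast]
      · rw [hstep, psiL_cons_head, if_neg hac, palE]
        simp [append_assoc]

lemma gcp_append_eq (a b : A) (hab : a ≠ b) :
    ∀ p s t : List A, gcp (p ++ a :: s) (p ++ b :: t) = p := by
  intro p
  induction p with
  | nil => intro s t; simp [gcp, hab]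
  | cons c p ih => intro s t; simp [gcp, ih]

end AuxProof4


/-- `Pal(u)·a` is a prefix of `ψ_u(ab)`, and
`Pal(u) = gcp(ψ_u(ab), ψ_u(ba))`. -/
theorem pal_prefix_psiW_and_gcp {A : Type*} [Fintype A] [DecidableEq A]
    (u : List A) (a b : A) (hab : a ≠ b) :
    (pal u ++ [a]) <+: psiW u [a, b] ∧
    pal u = gcp (psiW u [a, b]) (psiW u [b, a]) := by
  obtain ⟨s, hsne, _, hab_eq⟩ := psiW_inv u a b hab
  obtain ⟨t, htne, _, hba_eq⟩ := psiW_inv u b a hab.symm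
  have hpal : pal u = palE u := pal_eq_palE u
  constructor
  · rw [hpal, hab_eq]
    exact ⟨s, by simp⟩
  · rw [hpal, hab_eq, hba_eq, gcp_append_eq a b hab]
end

section
/- Let A be a finite alphabet with at least two letters, u ∈ A*, π a permutation of A, w a prefix of Pal(u), and let σ be the w-conjugate of ψ_u ∘ π. Then for all letters a ≠ b in A: |gcs(σ(ab), σ(ba))| = |w|, and (card A − 1)·|gcp(σ(ab), σ(ba))| = ‖σ‖ − card A − (card A − 1)·|w|. -/
open List

section Aux
set_option linter.unusedSectionVars false
variable {A : Type*} [DecidableEq A]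

namespace EpiAux

/-! ### gcp / gcs basics -/

@[simp] lemma gcp_nil_left (y : List A) : gcp [] y = [] := by cases y <;> rfl
@[simp] lemma gcp_nil_right (x : List A) : gcp x [] = [] := by cases x <;> rfl

lemma gcp_cons (a b : A) (x y : List A) :
    gcp (a :: x) (b :: y) = if a = b then a :: gcp x y else [] := rfl

lemma gcp_prefix_left : ∀ x y : List A, gcp x y <+: x
  | [], y => by simp
  | a :: x, [] => by simp
  | a :: x, b :: y => by
    rw [gcp_cons]
    split
    · exact List.cons_prefix_cons.mpr ⟨rfl, gcp_prefix_left x y⟩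
    · exact List.nil_prefix

lemma gcp_prefix_right : ∀ x y : List A, gcp x y <+: y
  | [], y => by simp
  | a :: x, [] => by simp
  | a :: x, b :: y => by
    rw [gcp_cons]
    split
    · next h => subst h; exact List.cons_prefix_cons.mpr ⟨rfl, gcp_prefix_right x y⟩
    · exact List.nil_prefix

lemma prefix_gcp : ∀ (p x y : List A), p <+: x → p <+: y → p <+: gcp x y
  | [], x, y, _, _ => List.nil_prefix
  | c :: p, a :: x, b :: y, h1, h2 => by
    obtain ⟨rfl, h1'⟩ := List.cons_prefix_cons.mp h1
    obtain ⟨rfl, h2'⟩ := List.cons_prefix_cons.mp h2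
    rw [gcp_cons, if_pos rfl]
    exact List.cons_prefix_cons.mpr ⟨rfl, prefix_gcp p x y h1' h2'⟩
  | c :: p, a :: x, [], h1, h2 => by simp at h2
  | c :: p, [], y, h1, h2 => by simp at h1

lemma gcp_append (s : List A) : ∀ x y : List A, gcp (s ++ x) (s ++ y) = s ++ gcp x y := by
  induction s with
  | nil => simp
  | cons a s ih => intro x y; simpa [gcp_cons] using ih x y

lemma gcp_head_ne {a b : A} (h : a ≠ b) (x y : List A) : gcp (a :: x) (b :: y) = [] := by
  rw [gcp_cons, if_neg h]

lemma gcs_suffix_left (x y : List A) : gcs x y <:+ x := by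
  have h := gcp_prefix_left x.reverse y.reverse
  have : (gcp x.reverse y.reverse).reverse <:+ x.reverse.reverse :=
    List.reverse_suffix.mpr h
  simpa [gcs] using this

lemma gcs_suffix_right (x y : List A) : gcs x y <:+ y := by
  have h := gcp_prefix_right x.reverse y.reverse
  have : (gcp x.reverse y.reverse).reverse <:+ y.reverse.reverse :=
    List.reverse_suffix.mpr h
  simpa [gcs] using this

lemma suffix_gcs {p x y : List A} (h1 : p <:+ x) (h2 : p <:+ y) : p <:+ gcs x y := by
  have h1' : p.reverse <+: x.reverse := List.reverse_prefix.mpr h1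
  have h2' : p.reverse <+: y.reverse := List.reverse_prefix.mpr h2
  have h := prefix_gcp _ _ _ h1' h2'
  have : p.reverse.reverse <:+ (gcp x.reverse y.reverse).reverse :=
    List.reverse_suffix.mpr h
  simpa [gcs] using this

lemma gcs_append (s x y : List A) : gcs (x ++ s) (y ++ s) = gcs x y ++ s := by
  simp [gcs, gcp_append]

lemma gcs_last_ne {a b : A} (h : a ≠ b) (x y : List A) :
    gcs (x ++ [a]) (y ++ [b]) = [] := by
  simp [gcs, gcp_head_ne h]

end EpiAux
end Aux
section Aux2
set_option linter.unusedSectionVars false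
variable {A : Type*} [DecidableEq A]
namespace EpiAux

/-! ### psi basics -/

@[simp] lemma psiL_nil (c : A) : psiL c [] = [] := rfl
@[simp] lemma psibarL_nil (c : A) : psibarL c [] = [] := rfl

lemma psiL_cons (c e : A) (z : List A) :
    psiL c (e :: z) = (if e = c then [c] else [c, e]) ++ psiL c z := by
  simp [psiL]

lemma psibarL_cons (c e : A) (z : List A) :
    psibarL c (e :: z) = (if e = c then [c] else [e, c]) ++ psibarL c z := by
  simp [psibarL]

lemma psiL_append (c : A) (x y : List A) : psiL c (x ++ y) = psiL c x ++ psiL c y := by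
  simp [psiL]

lemma psibarL_append (c : A) (x y : List A) :
    psibarL c (x ++ y) = psibarL c x ++ psibarL c y := by
  simp [psibarL]

@[simp] lemma psiW_nil_word (z : List A) : psiW ([] : List A) z = z := rfl

lemma psiW_cons_word (c : A) (u z : List A) : psiW (c :: u) z = psiL c (psiW u z) := rfl

lemma psibarW_nil_word (z : List A) : psibarW ([] : List A) z = z := rfl

lemma psibarW_cons_word (c : A) (u z : List A) :
    psibarW (c :: u) z = psibarL c (psibarW u z) := rfl

lemma psiW_append (u : List A) (x y : List A) :
    psiW u (x ++ y) = psiW u x ++ psiW u y := by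
  induction u with
  | nil => rfl
  | cons c u ih => simp [psiW_cons_word, ih, psiL_append]

lemma psibarW_append (u : List A) (x y : List A) :
    psibarW u (x ++ y) = psibarW u x ++ psibarW u y := by
  induction u with
  | nil => rfl
  | cons c u ih => simp [psibarW_cons_word, ih, psibarL_append]

/-- ψ_c(z) ++ [c] = c :: ψ̄_c(z) -/
lemma psiL_concat (c : A) (z : List A) : psiL c z ++ [c] = c :: psibarL c z := by
  induction z with
  | nil => rfl
  | cons e z ih =>
    rw [psiL_cons, psibarL_cons]
    by_cases he : e = c <;> simp [he, ih]

lemma reverse_psiL (c : A) (z : List A) : (psiL c z).reverse = psibarL c z.reverse := by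
  induction z with
  | nil => rfl
  | cons e z ih =>
    rw [psiL_cons, List.reverse_append, ih, List.reverse_cons, psibarL_append]
    by_cases he : e = c <;> simp [he, psibarL_cons]

lemma reverse_psibarL (c : A) (z : List A) : (psibarL c z).reverse = psiL c z.reverse := by
  have := reverse_psiL c z.reverse
  simp at this
  rw [← this, List.reverse_reverse]

lemma length_psibarL (c : A) (z : List A) : (psibarL c z).length = (psiL c z).length := by
  induction z with
  | nil => rfl
  | cons e z ih =>
    rw [psiL_cons, psibarL_cons]
    by_cases he : e = c <;> simp [he, ih]

lemma length_psiL_reverse (c : A) (z : List A) :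
    (psiL c z.reverse).length = (psiL c z).length := by
  rw [← length_psibarL, ← reverse_psiL, List.length_reverse]

lemma count_psiL_self (c : A) (z : List A) : (psiL c z).count c = z.length := by
  induction z with
  | nil => rfl
  | cons e z ih =>
    rw [psiL_cons]
    by_cases he : e = c <;> simp [he, ih, List.count_cons]

lemma count_psiL_ne (c d : A) (hd : d ≠ c) (z : List A) :
    (psiL c z).count d = z.count d := by
  induction z with
  | nil => rfl
  | cons e z ih =>
    rw [psiL_cons]
    by_cases he : e = c <;> simp [he, ih, List.count_cons, hd, Ne.symm hd]

lemma length_psiL_add_count (c : A) (z : List A) :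
    (psiL c z).length + z.count c = 2 * z.length := by
  induction z with
  | nil => rfl
  | cons e z ih =>
    rw [psiL_cons]
    by_cases he : e = c <;> simp [he, List.count_cons] <;> omega

lemma length_le_length_psiL (c : A) (z : List A) : z.length ≤ (psiL c z).length := by
  have h := length_psiL_add_count c z
  have h2 : z.count c ≤ z.length := List.count_le_length
  omega

lemma length_psiL_append_single (c x : A) (z : List A) :
    (psiL c (z ++ [x])).length =
      (psiL c z).length + (if x = c then 1 else 2) := by
  rw [psiL_append]
  by_cases hx : x = c <;> simp [hx, psiL_cons]

/-- every nonempty ψ_c-image starts with c -/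
lemma psiL_head (c : A) (z : List A) (h : z ≠ []) : ∃ t, psiL c z = c :: t := by
  cases z with
  | nil => exact absurd rfl h
  | cons e z =>
    rw [psiL_cons]
    by_cases he : e = c <;> simp [he]

lemma psiL_injective (c : A) : ∀ z z' : List A, psiL c z = psiL c z' → z = z'
  | [], [], _ => rfl
  | [], e' :: z', h => by
    rw [psiL_cons] at h
    by_cases he : e' = c <;> simp [he] at h
  | e :: z, [], h => by
    rw [psiL_cons] at h
    by_cases he : e = c <;> simp [he] at h
  | e :: z, e' :: z', h => by
    rw [psiL_cons, psiL_cons] at h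
    by_cases he : e = c <;> by_cases he' : e' = c
    · simp [he, he'] at h
      rw [he, he', psiL_injective c z z' h]
    · simp [he, he'] at h
      exfalso
      rcases z with _ | ⟨f, z2⟩
      · simp at h
      · obtain ⟨t, ht⟩ := psiL_head c (f :: z2) (by simp)
        rw [ht] at h
        simp at h
        exact he' h.1.symm
    · simp [he, he'] at h
      exfalso
      rcases z' with _ | ⟨f, z2⟩
      · simp at h
      · obtain ⟨t, ht⟩ := psiL_head c (f :: z2) (by simp)
        rw [ht] at h
        simp at h
        exact he h.1
    · simp [he, he'] at h
      rw [h.1, psiL_injective c z z' h.2]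

/-- ψ_u([x]) ends with x -/
lemma psiW_single_last (u : List A) (x : A) : ∃ t, psiW u [x] = t ++ [x] := by
  induction u with
  | nil => exact ⟨[], rfl⟩
  | cons c u ih =>
    obtain ⟨t, ht⟩ := ih
    rw [psiW_cons_word, ht, psiL_append]
    by_cases hx : x = c
    · exact ⟨psiL c t, by simp [hx, psiL_cons]⟩
    · exact ⟨psiL c t ++ [c], by simp [hx, psiL_cons]⟩

/-- ψ̄_u([x]) starts with x -/
lemma psibarW_single_head (u : List A) (x : A) : ∃ t, psibarW u [x] = x :: t := by
  induction u with
  | nil => exact ⟨[], rfl⟩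
  | cons c u ih =>
    obtain ⟨t, ht⟩ := ih
    rw [psibarW_cons_word, ht, psibarL_cons]
    by_cases hx : x = c
    · exact ⟨psibarL c t, by simp [hx]⟩
    · exact ⟨c :: psibarL c t, by simp [hx]⟩

end EpiAux
end Aux2
section Aux3
set_option linter.unusedSectionVars false
variable {A : Type*} [DecidableEq A]
namespace EpiAux

/-! ### palPlus basics -/

lemma palPlus_palindrome (s : List A) : (palPlus s).reverse = palPlus s :=
  (Classical.choose_spec (exists_isPalClosure s)).1.1

lemma prefix_palPlus (s : List A) : s <+: palPlus s :=
  (Classical.choose_spec (exists_isPalClosure s)).1.2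

lemma palPlus_min (s : List A) {q : List A} (hq : q.reverse = q) (hpre : s <+: q) :
    (palPlus s).length ≤ q.length :=
  (Classical.choose_spec (exists_isPalClosure s)).2 q hq hpre

lemma palPlus_length_le (s : List A) : (palPlus s).length ≤ 2 * s.length := by
  have := palPlus_min s (q := s ++ s.reverse) (by simp) ⟨s.reverse, rfl⟩
  simpa [two_mul] using this

lemma length_le_palPlus (s : List A) : s.length ≤ (palPlus s).length :=
  (prefix_palPlus s).length_le

/-- form of a short palindrome extending s -/
lemma palindrome_prefix_form {s Q : List A} (hQ : Q.reverse = Q) (hpre : s <+: Q)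
    (hlen : Q.length ≤ 2 * s.length) :
    Q = s.take (Q.length - s.length) ++ s.reverse ∧
      (s.drop (Q.length - s.length)).reverse = s.drop (Q.length - s.length) := by
  have hs : s.length ≤ Q.length := hpre.length_le
  set j := Q.length - s.length with hj
  have hjle : j ≤ s.length := by omega
  -- reverse s is a suffix of Q
  have hsuf : s.reverse <:+ Q := by
    have := List.reverse_suffix.mpr hpre  -- s.reverse <:+ Q.reverse
    rwa [hQ] at this
  obtain ⟨h, hh⟩ := hsuf
  have hhl : h.length = j := by
    have := congrArg List.length hh
    simp at this; omega
  obtain ⟨t, ht⟩ := hpre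
  have htake : h = s.take j := by
    have h1 : (h ++ s.reverse).take j = h := by
      rw [List.take_append_of_le_length (by omega), List.take_of_length_le (by omega)]
    have h2 : (s ++ t).take j = s.take j := List.take_append_of_le_length hjle
    rw [hh] at h1; rw [ht] at h2; rw [← h1, h2]
  have hform : Q = s.take j ++ s.reverse := by rw [← htake, hh]
  refine ⟨hform, ?_⟩
  -- palindromicity of m := s.drop j
  set m := s.drop j with hm
  have hsm : s = s.take j ++ m := (List.take_append_drop j s).symm
  have hmpre : m <+: s.reverse := by
    have hst : s ++ t = s.take j ++ s.reverse := by rw [ht, hform]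
    have h5 : s.take j ++ (m ++ t) = s.take j ++ s.reverse := by
      rw [← List.append_assoc, ← hsm]; exact hst
    exact ⟨t, List.append_cancel_left h5⟩
  have hmtake : m = (s.reverse).take m.length := List.prefix_iff_eq_take.mp hmpre
  have : (s.reverse).take m.length = m.reverse := by
    have hrev : (s.drop j).reverse = List.take (s.length - j) s.reverse := List.reverse_drop
    have hlm : m.length = s.length - j := by simp [hm]
    rw [hlm, ← hrev]
  exact (hmtake.trans this).symm

lemma palPlus_eq {s Q : List A} (hQ : Q.reverse = Q) (hpre : s <+: Q)
    (hmin : (Q.length ≤ (palPlus s).length)) : palPlus s = Q := by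
  have h1 : (palPlus s).length ≤ Q.length := palPlus_min s hQ hpre
  have hlen : (palPlus s).length = Q.length := le_antisymm h1 hmin
  have h2 : Q.length ≤ 2 * s.length := by
    have := palPlus_length_le s; omega
  have hf1 := palindrome_prefix_form (palPlus_palindrome s) (prefix_palPlus s)
    (by rw [hlen]; exact h2)
  have hf2 := palindrome_prefix_form hQ hpre h2
  rw [hf1.1, hf2.1, hlen]

/-! ### pal basics -/

lemma pal_nil : pal ([] : List A) = [] := rfl

lemma pal_append_singleton (u : List A) (x : A) :
    pal (u ++ [x]) = palPlus (pal u ++ [x]) := by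
  simp [pal, List.foldl_append]

lemma palPlus_single (c : A) : palPlus [c] = [c] := by
  apply palPlus_eq (by simp) (List.prefix_refl _)
  exact length_le_palPlus [c]

lemma pal_palindrome (u : List A) : (pal u).reverse = pal u := by
  induction u using List.reverseRecOn with
  | nil => rfl
  | append_singleton v x ih => rw [pal_append_singleton]; exact palPlus_palindrome _

end EpiAux
end Aux3
section Aux4
set_option linter.unusedSectionVars false
set_option maxHeartbeats 1000000
variable {A : Type*} [DecidableEq A]
namespace EpiAux

/-- decoding suffixes of ψ_c-images -/
lemma psiL_decode (c : A) : ∀ (q t : List A), t <:+ psiL c q → t ≠ [] →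
    (t.head? = some c → ∃ m₁, m₁ <:+ q ∧ t = psiL c m₁) ∧
    (t.head? ≠ some c → ∃ m₁, m₁ <:+ q ∧ c :: t = psiL c m₁)
  | [], t, hsuf, hne => by
    simp only [psiL_nil, List.suffix_nil] at hsuf
    exact absurd hsuf hne
  | e :: q', t, hsuf, hne => by
    rw [psiL_cons] at hsuf
    by_cases hl : t.length ≤ (psiL c q').length
    · have ht' : t <:+ psiL c q' :=
        List.suffix_of_suffix_length_le hsuf (List.suffix_append _ _) hl
      obtain ⟨ih1, ih2⟩ := psiL_decode c q' t ht' hne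
      constructor
      · intro hh; obtain ⟨m₁, hm, he⟩ := ih1 hh
        exact ⟨m₁, hm.trans (List.suffix_cons e q'), he⟩
      · intro hh; obtain ⟨m₁, hm, he⟩ := ih2 hh
        exact ⟨m₁, hm.trans (List.suffix_cons e q'), he⟩
    · obtain ⟨pre, hpre⟩ := hsuf
      by_cases hec : e = c
      · rw [if_pos hec] at hpre
        have hpre0 : pre = [] := by
          have := congrArg List.length hpre
          simp at this
          exact List.eq_nil_of_length_eq_zero (by omega)
        subst hpre0
        simp only [List.nil_append] at hpre
        constructor
        · intro _
          refine ⟨e :: q', List.suffix_refl _, ?_⟩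
          rw [psiL_cons, if_pos hec, ← hpre]
        · intro hh
          exact absurd (by rw [hpre]; rfl) hh
      · rw [if_neg hec] at hpre
        have hplen : pre.length ≤ 1 := by
          have := congrArg List.length hpre
          simp at this; omega
        rcases pre with _ | ⟨p0, pre'⟩
        · simp only [List.nil_append] at hpre
          constructor
          · intro _
            refine ⟨e :: q', List.suffix_refl _, ?_⟩
            rw [psiL_cons, if_neg hec, ← hpre]
          · intro hh
            exact absurd (by rw [hpre]; rfl) hh
        · have hpre'0 : pre' = [] := by
            simpa using hplen
          subst hpre'0
          have hpre2 : p0 :: t = c :: e :: psiL c q' := hpre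
          have ht : t = e :: psiL c q' := by injection hpre2
          constructor
          · intro hh
            rw [ht] at hh
            simp at hh
            exact absurd hh hec
          · intro _
            refine ⟨e :: q', List.suffix_refl _, ?_⟩
            rw [psiL_cons, if_neg hec, ht]
            rfl

/-- THE core lemma: palindromic closure commutes with ψ_c. -/
lemma palPlus_psiL (c x : A) (q : List A) :
    palPlus (psiL c q ++ [c, x]) = psiL c (palPlus (q ++ [x])) ++ [c] := by
  set t : List A := q ++ [x] with htdef
  set r : List A := palPlus t with hrdef
  have hrpal : r.reverse = r := palPlus_palindrome t
  have hrpre : t <+: r := prefix_palPlus t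
  obtain ⟨r'', hr''⟩ := hrpre
  set s : List A := psiL c q ++ [c, x] with hsdef
  -- candidate R = ψ_c r ++ [c] is a palindrome with prefix s
  have hRpal : (psiL c r ++ [c]).reverse = psiL c r ++ [c] := by
    rw [List.reverse_append, reverse_psiL, hrpal]
    simpa using (psiL_concat c r).symm
  have hRpre : s <+: psiL c r ++ [c] := by
    have hr2 : r = q ++ ([x] ++ r'') := by rw [← hr'', htdef]; simp
    rw [hr2, psiL_append, psiL_append]
    by_cases hxc : x = c
    · rcases r'' with _ | ⟨f, r''t⟩
      · simp [hsdef, psiL_cons, hxc]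
      · obtain ⟨t₂, ht₂⟩ := psiL_head c (f :: r''t) (by simp)
        rw [ht₂]
        refine ⟨t₂ ++ [c], ?_⟩
        simp [hsdef, psiL_cons, hxc]
    · refine ⟨psiL c r'' ++ [c], ?_⟩
      simp [hsdef, psiL_cons, hxc]
  -- maximal palindromic suffix data of t
  have hrlen2 : r.length ≤ 2 * t.length := palPlus_length_le t
  have htlen : t.length ≤ r.length := (prefix_palPlus t).length_le
  obtain ⟨hrform, hm₀pal⟩ := palindrome_prefix_form hrpal (prefix_palPlus t) hrlen2
  set ℓ : ℕ := r.length - t.length with hℓ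
  set m₀ : List A := t.drop ℓ with hm₀def
  have hℓle : ℓ ≤ t.length := by omega
  have hm₀suf : m₀ <:+ t := List.drop_suffix _ _
  have hm₀len : m₀.length = t.length - ℓ := by simp [hm₀def]
  have hm₀max : ∀ m' : List A, m'.reverse = m' → m' <:+ t → m'.length ≤ m₀.length := by
    intro m' hp hsuf
    obtain ⟨u'', hu''⟩ := hsuf
    have hQpal : (t ++ u''.reverse).reverse = t ++ u''.reverse := by
      rw [← hu'']
      simp only [List.reverse_append, List.reverse_reverse, hp]
      simp [List.append_assoc]
    have hmin := palPlus_min t hQpal ⟨u''.reverse, rfl⟩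
    have hul : u''.length + m'.length = t.length := by
      have := congrArg List.length hu''; simpa using this
    have : r.length ≤ t.length + u''.length := by simpa using hmin
    omega
  have hm₀ne : (1:ℕ) ≤ m₀.length := by
    have := hm₀max [x] (by simp) ⟨q, rfl⟩
    simpa using this
  -- F-arithmetic : |ψ_c r| + |ψ_c m₀| = 2 |ψ_c t|
  have hFrm : (psiL c r).length + (psiL c m₀).length = 2 * (psiL c t).length := by
    have h1 : (psiL c r).length = (psiL c (t.take ℓ)).length + (psiL c t).length := by
      conv_lhs => rw [hrform]
      rw [psiL_append, List.length_append]
      have := length_psiL_reverse c t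
      omega
    have h2 : (psiL c t).length = (psiL c (t.take ℓ)).length + (psiL c m₀).length := by
      conv_lhs => rw [← List.take_append_drop ℓ t]
      rw [psiL_append, List.length_append, hm₀def]
    omega
  -- the main bound for palindromic suffixes of s
  have Hm : ∀ m : List A, m.reverse = m → m <:+ s →
      m.length + (psiL c r).length + 1 ≤ 2 * s.length := by
    intro m hmp hmsuf
    have hslen : s.length = (psiL c q).length + 2 := by simp [hsdef]
    have hFt : (psiL c t).length = (psiL c q).length + (if x = c then 1 else 2) := by
      rw [htdef, psiL_append]
      by_cases hxc : x = c <;> simp [psiL_cons, hxc]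
    obtain ⟨g, hg⟩ := hmsuf
    have hglen : g.length + m.length = s.length := by
      have := congrArg List.length hg; simpa using this
    by_cases hxc : x = c
    · rw [if_pos hxc] at hFt
      have hkey : m.length ≤ (psiL c m₀).length + 1 := by
        by_cases hsmall : m.length ≤ 2
        · have := length_le_length_psiL c m₀
          omega
        · have hgle : g.length ≤ (psiL c q).length := by omega
          have hmdec : m = (psiL c q).drop g.length ++ [c, x] := by
            have hd : s.drop g.length = m := by rw [← hg, List.drop_left]
            rw [← hd, hsdef, List.drop_append_of_le_length hgle]
          set m'' : List A := (psiL c q).drop g.length with hm''def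
          have hm''suf : m'' <:+ psiL c q := List.drop_suffix _ _
          have hm''ne : m'' ≠ [] := by
            intro h
            rw [hmdec, h] at hsmall
            simp at hsmall
          have hmlast : m.getLast? = some x := by
            rw [hmdec]; simp [List.getLast?_append]
          have hmhead : m.head? = some c := by
            rw [← hmp, List.head?_reverse, hmlast, hxc]
          have hm''head : m''.head? = some c := by
            obtain ⟨v, m''t, hv⟩ := List.exists_cons_of_ne_nil hm''ne
            rw [hv] at hmdec ⊢
            rw [hmdec] at hmhead
            simp at hmhead ⊢
            exact hmhead
          obtain ⟨m₁, hm₁suf, hm₁eq⟩ := (psiL_decode c q m'' hm''suf hm''ne).1 hm''head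
          have e1 : m = psiL c (m₁ ++ [c]) ++ [c] := by
            rw [hmdec, hm₁eq, psiL_append, hxc]
            simp [psiL_cons]
          have e2 : m = psiL c ((m₁ ++ [c]).reverse) ++ [c] := by
            conv_lhs => rw [← hmp, e1]
            rw [List.reverse_append, reverse_psiL]
            simpa using (psiL_concat c (m₁ ++ [c]).reverse).symm
          have hpal1 : (m₁ ++ [c]).reverse = m₁ ++ [c] :=
            (psiL_injective c _ _ (List.append_cancel_right (e1.symm.trans e2))).symm
          have hsuf1 : m₁ ++ [c] <:+ t := by
            obtain ⟨g2, hg2⟩ := hm₁suf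
            refine ⟨g2, ?_⟩
            rw [htdef, ← hg2, hxc]
            simp
          have hlen1 : (m₁ ++ [c]).length ≤ m₀.length := hm₀max _ hpal1 hsuf1
          obtain ⟨g3, hg3⟩ := List.suffix_of_suffix_length_le hsuf1 hm₀suf hlen1
          have hF2 : (psiL c m₀).length =
              (psiL c g3).length + (psiL c (m₁ ++ [c])).length := by
            rw [← hg3, psiL_append, List.length_append]
          have hmlen : m.length = (psiL c (m₁ ++ [c])).length + 1 := by
            rw [e1]; simp
          omega
      omega
    · rw [if_neg hxc] at hFt
      have hm₀dec : m₀ = q.drop ℓ ++ [x] := by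
        have htl : t.length = q.length + 1 := by rw [htdef]; simp
        have hℓq : ℓ ≤ q.length := by omega
        rw [hm₀def, htdef, List.drop_append_of_le_length hℓq]
      have hFm₀ : (psiL c m₀).length = (psiL c (q.drop ℓ)).length + 2 := by
        rw [hm₀dec, psiL_append]
        simp [psiL_cons, hxc]
      have hkey : m.length + 1 ≤ (psiL c m₀).length := by
        by_cases hsmall : m.length ≤ 1
        · omega
        · have hgle : g.length ≤ (psiL c q).length := by omega
          have hmdec : m = (psiL c q).drop g.length ++ [c, x] := by
            have hd : s.drop g.length = m := by rw [← hg, List.drop_left]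
            rw [← hd, hsdef, List.drop_append_of_le_length hgle]
          set m'' : List A := (psiL c q).drop g.length with hm''def
          have hm''suf : m'' <:+ psiL c q := List.drop_suffix _ _
          have hmlast : m.getLast? = some x := by
            rw [hmdec]; simp [List.getLast?_append]
          have hmhead : m.head? = some x := by
            rw [← hmp, List.head?_reverse, hmlast]
          by_cases hm''ne : m'' = []
          · exfalso
            rw [hmdec, hm''ne] at hmp
            simp at hmp
            exact hxc hmp.2.symm
          · have hm''head : m''.head? = some x := by
              obtain ⟨v, m''t, hv⟩ := List.exists_cons_of_ne_nil hm''ne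
              rw [hv] at hmdec ⊢
              rw [hmdec] at hmhead
              simp at hmhead ⊢
              exact hmhead
            obtain ⟨m₁, hm₁suf, hm₁eq⟩ := (psiL_decode c q m'' hm''suf hm''ne).2
              (by rw [hm''head]; simp [hxc])
            have e1 : c :: m = psiL c (m₁ ++ [x]) := by
              rw [hmdec, ← List.cons_append, hm₁eq, psiL_append]
              simp [psiL_cons, hxc]
            have e2 : c :: m = psiL c ([x] ++ m₁.reverse) := by
              have hrev : (c :: m) ++ [c] = psiL c ([x] ++ m₁.reverse) ++ [c] := by
                rw [psiL_concat]
                have h0 : (psiL c (m₁ ++ [x])).reverse =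
                    psibarL c ([x] ++ m₁.reverse) := by
                  rw [reverse_psiL]
                  congr 1
                  simp
                rw [← e1] at h0
                simp only [List.reverse_cons, hmp] at h0
                rw [List.cons_append, ← h0]
              exact List.append_cancel_right hrev
            have hpal1 : (m₁ ++ [x]).reverse = m₁ ++ [x] := by
              have h := psiL_injective c _ _ (e1.symm.trans e2)
              simp only [List.reverse_append, List.reverse_cons, List.reverse_nil,
                List.nil_append, List.singleton_append]
              exact h.symm
            have hsuf1 : m₁ ++ [x] <:+ t := by
              obtain ⟨g2, hg2⟩ := hm₁suf
              exact ⟨g2, by rw [htdef, ← hg2]; simp⟩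
            have hlen1 : (m₁ ++ [x]).length ≤ m₀.length := hm₀max _ hpal1 hsuf1
            obtain ⟨g3, hg3⟩ := List.suffix_of_suffix_length_le hsuf1 hm₀suf hlen1
            have hF2 : (psiL c m₀).length =
                (psiL c g3).length + (psiL c (m₁ ++ [x])).length := by
              rw [← hg3, psiL_append, List.length_append]
            have hmlen := congrArg List.length e1
            simp at hmlen
            omega
      omega
  -- conclude
  have hPpal : (palPlus s).reverse = palPlus s := palPlus_palindrome s
  have hPpre : s <+: palPlus s := prefix_palPlus s
  have hP2 : (palPlus s).length ≤ 2 * s.length := palPlus_length_le s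
  have hsP : s.length ≤ (palPlus s).length := hPpre.length_le
  obtain ⟨hPform, hmPpal⟩ := palindrome_prefix_form hPpal hPpre hP2
  have hmPsuf : s.drop ((palPlus s).length - s.length) <:+ s := List.drop_suffix _ _
  have hmPlen : (s.drop ((palPlus s).length - s.length)).length =
      2 * s.length - (palPlus s).length := by
    simp only [List.length_drop]; omega
  have hbd := Hm _ hmPpal hmPsuf
  have hRle : (psiL c r ++ [c]).length ≤ (palPlus s).length := by
    simp only [List.length_append, List.length_cons, List.length_nil]
    omega
  exact palPlus_eq hRpal hRpre hRle

end EpiAux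
end Aux4
section Aux5
set_option linter.unusedSectionVars false
set_option maxHeartbeats 1000000
variable {A : Type*} [DecidableEq A]
namespace EpiAux

/-- Justin's formula. -/
theorem pal_cons (c : A) (v : List A) : pal (c :: v) = psiL c (pal v) ++ [c] := by
  induction v using List.reverseRecOn with
  | nil =>
    have h0 : pal [c] = palPlus (pal ([] : List A) ++ [c]) := pal_append_singleton [] c
    rw [h0, pal_nil]
    simp only [List.nil_append, palPlus_single, pal_nil, psiL_nil]
  | append_singleton v x ih =>
    have h1 : c :: (v ++ [x]) = (c :: v) ++ [x] := rfl
    rw [h1, pal_append_singleton, ih, pal_append_singleton]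
    have h2 : psiL c (pal v) ++ [c] ++ [x] = psiL c (pal v) ++ [c, x] := by simp
    rw [h2, palPlus_psiL]

/-- ψ_u(z) · Pal(u) = Pal(u) · ψ̄_u(z) -/
theorem psiW_pal (u : List A) (z : List A) :
    psiW u z ++ pal u = pal u ++ psibarW u z := by
  induction u generalizing z with
  | nil => simp [pal_nil, psibarW_nil_word]
  | cons c v ih =>
    rw [pal_cons, psiW_cons_word, psibarW_cons_word]
    calc psiL c (psiW v z) ++ (psiL c (pal v) ++ [c])
        = psiL c (psiW v z ++ pal v) ++ [c] := by rw [psiL_append]; simp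
      _ = psiL c (pal v ++ psibarW v z) ++ [c] := by rw [ih]
      _ = psiL c (pal v) ++ (psiL c (psibarW v z) ++ [c]) := by rw [psiL_append]; simp
      _ = psiL c (pal v) ++ [c] ++ psibarL c (psibarW v z) := by rw [psiL_concat]; simp

/-- sum of counts over all letters -/
lemma length_eq_sum_count [Fintype A] (z : List A) :
    z.length = ∑ d : A, z.count d := by
  induction z with
  | nil => simp
  | cons a z ih =>
    have h2 : ∀ d : A, (a :: z).count d = z.count d + if a = d then 1 else 0 := by
      intro d; rw [List.count_cons]; simp [beq_iff_eq]
    simp only [List.length_cons, h2, Finset.sum_add_distrib, ← ih]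
    have h3 : (∑ d : A, if a = d then 1 else 0) = 1 := by simp
    omega

lemma count_psiW_sum [Fintype A] (hcard : 1 ≤ Fintype.card A) (u : List A) :
    ∀ d : A, ∑ x : A, (psiW u [x]).count d
      = 1 + (Fintype.card A - 1) * (pal u).count d := by
  induction u with
  | nil =>
    intro d
    simp only [psiW_nil_word, pal_nil, List.count_nil, Nat.mul_zero, Nat.add_zero]
    have h : ∀ x : A, ([x] : List A).count d = if x = d then 1 else 0 := by
      intro x
      rw [show ([x] : List A) = x :: [] from rfl, List.count_cons]
      simp [beq_iff_eq]
    simp only [h]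
    simp
  | cons c v ih =>
    intro d
    have hpal := pal_cons c v
    by_cases hdc : d = c
    · subst hdc
      calc ∑ x : A, (psiW (d :: v) [x]).count d
          = ∑ x : A, ∑ e : A, (psiW v [x]).count e := by
            refine Finset.sum_congr rfl fun x _ => ?_
            rw [psiW_cons_word, count_psiL_self, length_eq_sum_count]
        _ = ∑ e : A, ∑ x : A, (psiW v [x]).count e := Finset.sum_comm
        _ = ∑ e : A, (1 + (Fintype.card A - 1) * (pal v).count e) :=
            Finset.sum_congr rfl fun e _ => ih e
        _ = Fintype.card A + (Fintype.card A - 1) * (pal v).length := by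
            rw [Finset.sum_add_distrib, ← Finset.mul_sum, ← length_eq_sum_count]
            simp [Finset.card_univ]
        _ = 1 + (Fintype.card A - 1) * ((pal v).length + 1) := by
            rw [Nat.mul_add, Nat.mul_one]; omega
        _ = 1 + (Fintype.card A - 1) * (pal (d :: v)).count d := by
            rw [hpal, List.count_append, count_psiL_self]
            simp
    · calc ∑ x : A, (psiW (c :: v) [x]).count d
          = ∑ x : A, (psiW v [x]).count d := by
            refine Finset.sum_congr rfl fun x _ => ?_
            rw [psiW_cons_word, count_psiL_ne c d hdc]
        _ = 1 + (Fintype.card A - 1) * (pal v).count d := ih d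
        _ = 1 + (Fintype.card A - 1) * (pal (c :: v)).count d := by
            rw [hpal, List.count_append, count_psiL_ne c d hdc]
            have : ([c] : List A).count d = 0 := by
              rw [show ([c] : List A) = c :: [] from rfl, List.count_cons]
              simp [beq_iff_eq]
              exact fun h => hdc h.symm
            rw [this, Nat.add_zero]

lemma psiW_length_sum [Fintype A] (hcard : 1 ≤ Fintype.card A) (u : List A) :
    ∑ x : A, (psiW u [x]).length
      = Fintype.card A + (Fintype.card A - 1) * (pal u).length := by
  calc ∑ x : A, (psiW u [x]).length
      = ∑ x : A, ∑ d : A, (psiW u [x]).count d :=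
        Finset.sum_congr rfl fun x _ => length_eq_sum_count _
    _ = ∑ d : A, ∑ x : A, (psiW u [x]).count d := Finset.sum_comm
    _ = ∑ d : A, (1 + (Fintype.card A - 1) * (pal u).count d) :=
        Finset.sum_congr rfl fun d _ => count_psiW_sum hcard u d
    _ = Fintype.card A + (Fintype.card A - 1) * (pal u).length := by
        rw [Finset.sum_add_distrib, ← Finset.mul_sum, ← length_eq_sum_count]
        simp [Finset.card_univ]

end EpiAux
end Aux5
section Aux6
set_option linter.unusedSectionVars false
set_option maxHeartbeats 1000000
variable {A : Type*} [DecidableEq A]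
namespace EpiAux

lemma suffix_append_right {p q l : List A} (h : p <:+ q ++ l) (hlen : p.length ≤ l.length) :
    p <:+ l :=
  List.suffix_of_suffix_length_le h (List.suffix_append q l) hlen

lemma prefix_append_left {p q l : List A} (h : p <+: l ++ q) (hlen : p.length ≤ l.length) :
    p <+: l :=
  List.prefix_of_prefix_length_le h (List.prefix_append l q) hlen

/-- ψ_u[x]ψ_u[y] = Pal(u) ++ z with z keeping two distinct letters. -/
lemma psiW_pair_decomp (u : List A) {x y : A} (hxy : x ≠ y) :
    ∃ z e₁ e₂, psiW u [x] ++ psiW u [y] = pal u ++ z ∧ e₁ ≠ e₂ ∧ e₁ ∈ z ∧ e₂ ∈ z := by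
  induction u with
  | nil => exact ⟨[x, y], x, y, by simp [pal_nil], hxy, by simp, by simp⟩
  | cons c v ih =>
    obtain ⟨z, e₁, e₂, hz, hne, h1, h2⟩ := ih
    have hzne : z ≠ [] := fun h => by rw [h] at h1; simp at h1
    have hzlen : 2 ≤ z.length := by
      rcases z with _ | ⟨a0, _ | ⟨a1, z'⟩⟩
      · simp at h1
      · simp at h1 h2; exact absurd (h1.trans h2.symm) hne
      · simp
    obtain ⟨tz, htz⟩ := psiL_head c z hzne
    have hcomp : psiW (c :: v) [x] ++ psiW (c :: v) [y] = pal (c :: v) ++ tz := by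
      rw [psiW_cons_word, psiW_cons_word, ← psiL_append, hz, psiL_append, htz, pal_cons]
      simp
    have hf : ∃ f, f ≠ c ∧ f ∈ z := by
      by_cases h : e₁ = c
      · exact ⟨e₂, fun hh => hne (h.trans hh.symm), h2⟩
      · exact ⟨e₁, h, h1⟩
    obtain ⟨f, hfc, hfz⟩ := hf
    refine ⟨tz, f, c, hcomp, hfc, ?_, ?_⟩
    · have hc1 : 0 < z.count f := List.count_pos_iff.mpr hfz
      have hc2 : (psiL c z).count f = z.count f := count_psiL_ne c f hfc z
      rw [htz, List.count_cons] at hc2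
      simp only [beq_iff_eq] at hc2
      rw [if_neg (fun h => hfc h.symm)] at hc2
      simp at hc2
      exact List.count_pos_iff.mp (by omega)
    · have hc2 : (psiL c z).count c = z.length := count_psiL_self c z
      rw [htz, List.count_cons] at hc2
      simp at hc2
      exact List.count_pos_iff.mp (by omega)

end EpiAux
end Aux6

open EpiAux

/-- for the w-conjugate σ of ψ_u ∘ π and letters a ≠ b,
`|gcs(σ(ab),σ(ba))| = |w|` and
`(|A|-1)·|gcp(σ(ab),σ(ba))| = ‖σ‖ - |A| - (|A|-1)·|w|`. -/
theorem gcs_gcp_length_of_conjugate {A : Type*} [Fintype A] [DecidableEq A]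
    (hA : 1 < Fintype.card A) (u : List A) (π : Equiv.Perm A)
    (w : List A) (hw : w <+: pal u)
    (σ : List A → List A) (hσhom : IsListHom σ)
    (hσ : ∀ a : A, psiW u [π a] ++ w = w ++ σ [a])
    (a b : A) (hab : a ≠ b) :
    (gcs (σ [a, b]) (σ [b, a])).length = w.length ∧
    (Fintype.card A - 1) * (gcp (σ [a, b]) (σ [b, a])).length =
      (∑ c : A, (σ [c]).length) - Fintype.card A - (Fintype.card A - 1) * w.length := by
  classical
  obtain ⟨w', hw'⟩ := hw
  set x := π a with hx
  set y := π b with hy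
  have hxy : x ≠ y := fun h => hab (π.injective h)
  set S := σ [a, b] with hS
  set T := σ [b, a] with hT
  have hSsplit : S = σ [a] ++ σ [b] := by
    have := hσhom [a] [b]; simpa [hS] using this
  have hTsplit : T = σ [b] ++ σ [a] := by
    have := hσhom [b] [a]; simpa [hT] using this
  have hwS : psiW u [x] ++ (psiW u [y] ++ w) = w ++ S := by
    calc psiW u [x] ++ (psiW u [y] ++ w)
        = psiW u [x] ++ (w ++ σ [b]) := by rw [hσ b]
      _ = (psiW u [x] ++ w) ++ σ [b] := by rw [List.append_assoc]
      _ = (w ++ σ [a]) ++ σ [b] := by rw [hσ a]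
      _ = w ++ S := by rw [hSsplit, List.append_assoc]
  have hwT : psiW u [y] ++ (psiW u [x] ++ w) = w ++ T := by
    calc psiW u [y] ++ (psiW u [x] ++ w)
        = psiW u [y] ++ (w ++ σ [a]) := by rw [hσ a]
      _ = (psiW u [y] ++ w) ++ σ [a] := by rw [List.append_assoc]
      _ = (w ++ σ [b]) ++ σ [a] := by rw [hσ b]
      _ = w ++ T := by rw [hTsplit, List.append_assoc]
  have hlenS : S.length = (psiW u [x]).length + (psiW u [y]).length := by
    have := congrArg List.length hwS; simp at this; omega
  have hlenT : T.length = (psiW u [x]).length + (psiW u [y]).length := by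
    have := congrArg List.length hwT; simp at this; omega
  obtain ⟨z, e₁, e₂, hzeq, hz12, hz1, hz2⟩ := psiW_pair_decomp u hxy
  have hSpal : S.length = (pal u).length + z.length := by
    have := congrArg List.length hzeq; simp at this; omega
  have hwlen : w.length + w'.length = (pal u).length := by
    have := congrArg List.length hw'; simpa using this
  have hwleS : w.length ≤ S.length := by omega
  have hw'leS : w'.length ≤ S.length := by omega
  have hTlenS : T.length = S.length := by omega
  -- gcs computation
  have hgcsW : gcs (psiW u [x] ++ psiW u [y]) (psiW u [y] ++ psiW u [x]) = [] := by
    obtain ⟨tx, htx⟩ := psiW_single_last u x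
    obtain ⟨ty, hty⟩ := psiW_single_last u y
    have e1 : psiW u [x] ++ psiW u [y] = (psiW u [x] ++ ty) ++ [y] := by rw [hty]; simp
    have e2 : psiW u [y] ++ psiW u [x] = (psiW u [y] ++ tx) ++ [x] := by rw [htx]; simp
    rw [e1, e2]
    exact gcs_last_ne (fun h => hxy h.symm) _ _
  have hgcs2 : gcs ((psiW u [x] ++ psiW u [y]) ++ w) ((psiW u [y] ++ psiW u [x]) ++ w)
      = w := by
    rw [gcs_append, hgcsW]; rfl
  have h1 : gcs S T <:+ w := by
    have hsufS : gcs S T <:+ (psiW u [x] ++ psiW u [y]) ++ w := by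
      have := (gcs_suffix_left S T).trans (List.suffix_append w S)
      rw [← hwS] at this
      simpa [List.append_assoc] using this
    have hsufT : gcs S T <:+ (psiW u [y] ++ psiW u [x]) ++ w := by
      have := (gcs_suffix_right S T).trans (List.suffix_append w T)
      rw [← hwT] at this
      simpa [List.append_assoc] using this
    have h3 := suffix_gcs hsufS hsufT
    rwa [hgcs2] at h3
  have h2 : w <:+ gcs S T := by
    apply suffix_gcs
    · refine suffix_append_right (q := w) ?_ hwleS
      rw [← hwS]
      exact (List.suffix_append _ w).trans (List.suffix_append _ _)
    · refine suffix_append_right (q := w) ?_ (by omega)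
      rw [← hwT]
      exact (List.suffix_append _ w).trans (List.suffix_append _ _)
  have hgcseq : gcs S T = w := h1.eq_of_length (le_antisymm h1.length_le h2.length_le)
  -- gcp computation
  have hcomm : (psiW u [x] ++ psiW u [y]) ++ pal u
      = pal u ++ (psibarW u [x] ++ psibarW u [y]) := by
    have := psiW_pal u ([x] ++ [y])
    rwa [psiW_append, psibarW_append] at this
  have hcommT : (psiW u [y] ++ psiW u [x]) ++ pal u
      = pal u ++ (psibarW u [y] ++ psibarW u [x]) := by
    have := psiW_pal u ([y] ++ [x])
    rwa [psiW_append, psibarW_append] at this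
  have hSw' : S ++ w' = w' ++ (psibarW u [x] ++ psibarW u [y]) := by
    apply List.append_cancel_left (as := w)
    calc w ++ (S ++ w') = (w ++ S) ++ w' := by rw [List.append_assoc]
      _ = ((psiW u [x] ++ psiW u [y]) ++ w) ++ w' := by
          rw [← hwS]; simp [List.append_assoc]
      _ = (psiW u [x] ++ psiW u [y]) ++ pal u := by
          rw [← hw']; simp [List.append_assoc]
      _ = pal u ++ (psibarW u [x] ++ psibarW u [y]) := hcomm
      _ = w ++ (w' ++ (psibarW u [x] ++ psibarW u [y])) := by
          rw [← hw']; simp [List.append_assoc]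
  have hTw' : T ++ w' = w' ++ (psibarW u [y] ++ psibarW u [x]) := by
    apply List.append_cancel_left (as := w)
    calc w ++ (T ++ w') = (w ++ T) ++ w' := by rw [List.append_assoc]
      _ = ((psiW u [y] ++ psiW u [x]) ++ w) ++ w' := by
          rw [← hwT]; simp [List.append_assoc]
      _ = (psiW u [y] ++ psiW u [x]) ++ pal u := by
          rw [← hw']; simp [List.append_assoc]
      _ = pal u ++ (psibarW u [y] ++ psibarW u [x]) := hcommT
      _ = w ++ (w' ++ (psibarW u [y] ++ psibarW u [x])) := by
          rw [← hw']; simp [List.append_assoc]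
  have hgcpbar : gcp (psibarW u [x] ++ psibarW u [y]) (psibarW u [y] ++ psibarW u [x])
      = [] := by
    obtain ⟨tx, htx⟩ := psibarW_single_head u x
    obtain ⟨ty, hty⟩ := psibarW_single_head u y
    have e1 : psibarW u [x] ++ psibarW u [y] = x :: (tx ++ psibarW u [y]) := by
      rw [htx]; simp
    have e2 : psibarW u [y] ++ psibarW u [x] = y :: (ty ++ psibarW u [x]) := by
      rw [hty]; simp
    rw [e1, e2]
    exact gcp_head_ne hxy _ _
  have hgcp2 : gcp (S ++ w') (T ++ w') = w' := by
    rw [hSw', hTw', gcp_append, hgcpbar]; simp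
  have h1' : gcp S T <+: w' := by
    have hpS : gcp S T <+: S ++ w' := (gcp_prefix_left S T).trans (List.prefix_append S w')
    have hpT : gcp S T <+: T ++ w' := (gcp_prefix_right S T).trans (List.prefix_append T w')
    have := prefix_gcp _ _ _ hpS hpT
    rwa [hgcp2] at this
  have h2' : w' <+: gcp S T := by
    apply prefix_gcp
    · refine prefix_append_left (q := w') ?_ hw'leS
      rw [hSw']
      exact List.prefix_append w' _
    · refine prefix_append_left (q := w') ?_ (by omega)
      rw [hTw']
      exact List.prefix_append w' _
  have hgcpeq : gcp S T = w' := (h2'.eq_of_length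
    (le_antisymm h2'.length_le h1'.length_le)).symm
  -- sum of lengths
  have hσlen : ∀ c : A, (σ [c]).length = (psiW u [π c]).length := by
    intro c
    have := congrArg List.length (hσ c)
    simp at this; omega
  have hsum : ∑ c : A, (σ [c]).length
      = Fintype.card A + (Fintype.card A - 1) * (pal u).length := by
    calc ∑ c : A, (σ [c]).length
        = ∑ c : A, (psiW u [π c]).length := Finset.sum_congr rfl fun c _ => hσlen c
      _ = ∑ c : A, (psiW u [c]).length := Equiv.sum_comp π (fun c => (psiW u [c]).length)
      _ = Fintype.card A + (Fintype.card A - 1) * (pal u).length :=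
          psiW_length_sum (by omega) u
  constructor
  · rw [hgcseq]
  · rw [hgcpeq, hsum]
    have hP : (pal u).length = w.length + w'.length := hwlen.symm
    rw [hP, Nat.mul_add]
    omega
end
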